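/- Let G be a (possibly infinite) group, H ≤ G a subgroup of finite index (so that the Weyl group W_G(H) = N_G(H)/H is a finite group), and S a finite G-set. Then Σ_{C ≤ W_G(H), C cyclic} φ(|C|) · |S^{p_H^{-1}(C)}| ≡ 0 (mod |W_G(H)|), where the sum runs over all cyclic subgroups C of W_G(H) and p_H^{-1}(C) ≤ G acts on S by restricting the G-action. (Necessity direction of the Burnside ring congruences for the finite-G-set version \overline{A}(G) of the Burnside ring of an arbitrary group.) -/

import Mathlib

open MulAction Subgroup

theorem aux_fixedPoints_zpowers {W X : Type*} [Group W] [MulAction W X] (g : W) :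
    fixedPoints (Subgroup.zpowers g) X = fixedBy X g := by
  ext x
  simp only [mem_fixedPoints, mem_fixedBy]
  constructor
  · intro h; exact h ⟨g, Subgroup.mem_zpowers g⟩
  · intro h c
    have hz : Subgroup.zpowers g ≤ MulAction.stabilizer W x :=
      Subgroup.zpowers_le.2 (MulAction.mem_stabilizer_iff.2 h)
    exact MulAction.mem_stabilizer_iff.1 (hz c.2)

theorem aux_fiber_card {W : Type*} [Group W] [Fintype W] [DecidableEq (Subgroup W)]
    (C : Subgroup W) (hC : IsCyclic C) :
    (Finset.univ.filter fun w : W => Subgroup.zpowers w = C).card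
      = Nat.totient (Nat.card C) := by
  classical
  have key : (Finset.univ.filter fun w : W => Subgroup.zpowers w = C).card
      = (Finset.univ.filter fun c : C => orderOf c = Fintype.card C).card := by
    apply Finset.card_bij (fun w hw => ⟨w, by
      simp only [Finset.mem_filter] at hw
      exact hw.2 ▸ Subgroup.mem_zpowers w⟩)
    · intro w hw
      simp only [Finset.mem_filter] at hw ⊢
      refine ⟨Finset.mem_univ _, ?_⟩
      rw [Subgroup.orderOf_mk, ← hw.2, Fintype.card_zpowers]
    · intro a ha b hb hab
      simpa using congrArg Subtype.val hab
    · intro c hc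
      simp only [Finset.mem_filter] at hc
      refine ⟨(c : W), ?_, rfl⟩
      simp only [Finset.mem_filter, Finset.mem_univ, true_and]
      apply Subgroup.eq_of_le_of_card_ge (Subgroup.zpowers_le.2 c.2)
      rw [Nat.card_zpowers, Subgroup.orderOf_coe, hc.2, Nat.card_eq_fintype_card]
  rw [key, IsCyclic.card_orderOf_eq_totient dvd_rfl, Nat.card_eq_fintype_card]

theorem aux_burnside (W : Type*) [Group W] [Finite W] (X : Type*) [Finite X] [MulAction W X] :
    Nat.card W ∣ ∑ᶠ (C : Subgroup W) (_ : IsCyclic C),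
      Nat.totient (Nat.card C) * Nat.card (MulAction.fixedPoints C X) := by
  classical
  have := Fintype.ofFinite W
  have := Fintype.ofFinite X
  have hsum : (∑ᶠ (C : Subgroup W) (_ : IsCyclic C),
      Nat.totient (Nat.card C) * Nat.card (MulAction.fixedPoints C X))
      = ∑ w : W, Nat.card (fixedBy X w) := by
    rw [finsum_eq_sum_of_fintype]
    rw [← Finset.sum_fiberwise Finset.univ (fun w : W => Subgroup.zpowers w)
      (fun w => Nat.card (fixedBy X w))]
    apply Finset.sum_congr rfl
    intro C _
    rw [finsum_eq_if]
    by_cases hC : IsCyclic C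
    · rw [if_pos hC]
      have : ∀ w ∈ Finset.univ.filter (fun w : W => Subgroup.zpowers w = C),
          Nat.card (fixedBy X w) = Nat.card (MulAction.fixedPoints C X) := by
        intro w hw
        simp only [Finset.mem_filter] at hw
        rw [← hw.2, aux_fixedPoints_zpowers]
      rw [Finset.sum_congr rfl this, Finset.sum_const, aux_fiber_card C hC, smul_eq_mul]
    · rw [if_neg hC]
      rw [Finset.sum_eq_zero]
      intro w hw
      simp only [Finset.mem_filter] at hw
      have : IsCyclic (Subgroup.zpowers w) := by
        refine ⟨⟨⟨w, Subgroup.mem_zpowers w⟩, ?_⟩⟩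
        rintro ⟨x, k, rfl⟩
        exact ⟨k, by ext; simp⟩
      exact absurd (hw.2 ▸ this) hC
  rw [hsum]
  have hb := MulAction.sum_card_fixedBy_eq_card_orbits_mul_card_group W X
  simp only [Nat.card_eq_fintype_card]
  rw [hb]
  exact ⟨_, (mul_comm _ _)⟩

namespace BurnsideAux

variable (G : Type*) [Group G] (S : Type*) [MulAction G S] (H : Subgroup G)

/-- The fixed points of `H` on `S`, as a set. -/
def Xset : Set S := MulAction.fixedPoints H S

variable {G S H} in
theorem smul_mem_Xset (n : (Subgroup.normalizer (H : Set G))) {s : S} (hs : s ∈ Xset G S H) :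
    (n : G) • s ∈ Xset G S H := by
  rw [Xset, MulAction.mem_fixedPoints] at hs ⊢
  intro h
  have hmem : (n : G)⁻¹ * (h : G) * (n : G) ∈ H :=
    (Subgroup.mem_normalizer_iff''.mp n.2 (h : G)).mp h.2
  have h2 := hs ⟨(n : G)⁻¹ * (h : G) * (n : G), hmem⟩
  rw [Subgroup.smul_def] at h2 ⊢
  rw [smul_smul, show (h : G) * (n : G) = (n : G) * ((n : G)⁻¹ * (h : G) * (n : G)) by group,
    ← smul_smul, h2]

instance actN : MulAction (Subgroup.normalizer (H : Set G)) (Xset G S H) where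
  smul n x := ⟨(n : G) • x.1, smul_mem_Xset n x.2⟩
  one_smul x := Subtype.ext (by
    show ((1 : (Subgroup.normalizer (H : Set G))) : G) • (x : S) = x
    simp)
  mul_smul a b x := Subtype.ext (by
    show ((a * b : (Subgroup.normalizer (H : Set G))) : G) • x.1 = (a : G) • ((b : G) • x.1)
    rw [Subgroup.coe_mul, mul_smul])

variable {G S H} in
theorem actN_smul_def (n : (Subgroup.normalizer (H : Set G))) (x : Xset G S H) :
    (n • x : Xset G S H).1 = (n : G) • x.1 := rfl

/-- The permutation action of the Weyl group on the `H`-fixed points. -/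
def qAct : ((Subgroup.normalizer (H : Set G)) ⧸ H.subgroupOf (Subgroup.normalizer (H : Set G))) →* Equiv.Perm (Xset G S H) :=
  QuotientGroup.lift (H.subgroupOf (Subgroup.normalizer (H : Set G)))
    (MulAction.toPermHom (Subgroup.normalizer (H : Set G)) (Xset G S H)) (by
      intro n hn
      ext x
      show (n • x : Xset G S H).1 = x.1
      rw [actN_smul_def]
      exact x.2 ⟨(n : G), hn⟩)

instance actW : MulAction ((Subgroup.normalizer (H : Set G)) ⧸ H.subgroupOf (Subgroup.normalizer (H : Set G))) (Xset G S H) :=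
  MulAction.compHom _ (qAct G S H)

variable {G S H} in
theorem actW_mk_smul (n : (Subgroup.normalizer (H : Set G))) (x : Xset G S H) :
    ((QuotientGroup.mk' (H.subgroupOf (Subgroup.normalizer (H : Set G))) n) • x : Xset G S H).1
      = (n : G) • x.1 := rfl

variable {G S H} in
theorem card_fixed_eq (C : Subgroup ((Subgroup.normalizer (H : Set G)) ⧸ H.subgroupOf (Subgroup.normalizer (H : Set G)))) :
    Nat.card (MulAction.fixedPoints C (Xset G S H)) =
      Nat.card (MulAction.fixedPoints
        ((C.comap (QuotientGroup.mk' (H.subgroupOf (Subgroup.normalizer (H : Set G))))).map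
          (Subgroup.normalizer (H : Set G)).subtype) S) := by
  apply Nat.card_congr
  refine ⟨fun x => ⟨x.1.1, ?_⟩, fun s => ⟨⟨s.1, ?_⟩, ?_⟩, fun x => Subtype.ext (Subtype.ext rfl),
    fun s => Subtype.ext rfl⟩
  · -- x fixed by C in Xset ⇒ x.1.1 fixed by the preimage subgroup in S
    rw [MulAction.mem_fixedPoints]
    rintro ⟨k, hk⟩
    rw [Subgroup.mem_map] at hk
    obtain ⟨n, hn, rfl⟩ := hk
    have h2 := x.2 ⟨QuotientGroup.mk' (H.subgroupOf (Subgroup.normalizer (H : Set G))) n, hn⟩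
    exact congrArg Subtype.val h2
  · -- s fixed by the preimage ⇒ s ∈ Xset
    rw [Xset, MulAction.mem_fixedPoints]
    intro h
    have hk : (h : G) ∈ (C.comap (QuotientGroup.mk' (H.subgroupOf (Subgroup.normalizer (H : Set G))))).map
        (Subgroup.normalizer (H : Set G)).subtype := by
      rw [Subgroup.mem_map]
      refine ⟨⟨(h : G), (Subgroup.le_normalizer (H := H)) h.2⟩, ?_, rfl⟩
      rw [Subgroup.mem_comap]
      have : (QuotientGroup.mk' (H.subgroupOf (Subgroup.normalizer (H : Set G))))
          ⟨(h : G), (Subgroup.le_normalizer (H := H)) h.2⟩ = 1 := by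
        rw [QuotientGroup.mk'_apply, QuotientGroup.eq_one_iff]
        exact h.2
      rw [this]
      exact C.one_mem
    exact s.2 ⟨(h : G), hk⟩
  · -- it is fixed by C
    rw [MulAction.mem_fixedPoints]
    rintro ⟨c, hc⟩
    obtain ⟨n, rfl⟩ := QuotientGroup.mk'_surjective (H.subgroupOf (Subgroup.normalizer (H : Set G))) c
    apply Subtype.ext
    show ((n : G) • s.1 : S) = s.1
    have hk : (n : G) ∈ (C.comap (QuotientGroup.mk' (H.subgroupOf (Subgroup.normalizer (H : Set G))))).map
        (Subgroup.normalizer (H : Set G)).subtype :=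
      Subgroup.mem_map.mpr ⟨n, Subgroup.mem_comap.mpr hc, rfl⟩
    exact s.2 ⟨(n : G), hk⟩

end BurnsideAux

/-- **Burnside ring congruences for the finite-`G`-set version `\overline{A}(G)`
(necessity direction).**  For an arbitrary group `G`, a finite-index subgroup
`H ≤ G` (so that the Weyl group `W_G(H) = N_G(H)/H` is finite) and a finite
`G`-set `S`, the sum over all cyclic subgroups `C ≤ W_G(H)` of
`φ(|C|) · |S^{p_H⁻¹(C)}|` is divisible by `|W_G(H)|`. -/
theorem burnside_congruence_finite_index
    (G : Type*) [Group G]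
    (S : Type*) [Finite S] [MulAction G S] (H : Subgroup G) (hH : H.FiniteIndex) :
    Nat.card (↥(Subgroup.normalizer (H : Set G)) ⧸ H.subgroupOf (Subgroup.normalizer (H : Set G))) ∣
      ∑ᶠ (C : Subgroup (↥(Subgroup.normalizer (H : Set G)) ⧸ H.subgroupOf (Subgroup.normalizer (H : Set G)))) (_ : IsCyclic C),
        Nat.totient (Nat.card C) *
          Nat.card (MulAction.fixedPoints
            ((C.comap (QuotientGroup.mk' (H.subgroupOf (Subgroup.normalizer (H : Set G))))).map
              (Subgroup.normalizer (H : Set G)).subtype) S) := by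
  haveI : (H.subgroupOf (Subgroup.normalizer (H : Set G))).FiniteIndex := by
    constructor
    intro h0
    apply hH.index_ne_zero
    rw [← Subgroup.relIndex_mul_index (Subgroup.le_normalizer (H := H)),
      show H.relIndex (Subgroup.normalizer (H : Set G)) = (H.subgroupOf (Subgroup.normalizer (H : Set G))).index from rfl, h0, zero_mul]
  have key := aux_burnside ((Subgroup.normalizer (H : Set G)) ⧸ H.subgroupOf (Subgroup.normalizer (H : Set G))) (BurnsideAux.Xset G S H)
  rw [finsum_congr (fun C => finsum_congr (fun _ =>
    congrArg _ (BurnsideAux.card_fixed_eq C)))] at key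
  exact key
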